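/- arXiv:2207.12109 — 2 statements merged into one kernel-verified Lean document; each statement's English description precedes it below -/
import Mathlib

section
/- Let K ≥ 1 be an integer, λ > 0 a real, and for each k = 1,…,K let m_k ≥ 1, n_k ≥ m_k be integers, μ_k > 0 a real, and φ_k : [0,∞) → ℝ be defined by φ_k(0) = 0 and φ_k(t) = t·B_{m_k,n_k}(t/μ_k) for t > 0. Then the problem of minimizing ∑_{k=1}^K φ_k(λ_k) over vectors (λ_1,…,λ_K) with λ_k ∈ [0,λ] for each k and ∑_{k=1}^K λ_k = λ has a minimizer, and the minimizer is unique. -/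
/-!
On `[0, ∞)` one has `t * B_{m,n}(t / μ) = c_n t^(n+1) / M₀(t)`, where
`M_k(t) = ∑_{j ≤ n} j^k c_j t^j` and `c_j = a_j(1 / μ) > 0`. The ratios
`c_j / c_(j+1) = μ min(j + 1, m)` are nondecreasing, i.e. `c` is log-concave, and this is all
that is needed: for `t > 0` the second derivative of `c_n t^(n+1) / M₀` is a positive multiple of
`n(n+1) M₀² - (2n+1) M₀ M₁ + 2 M₁² - M₀ M₂ = ∑_s t^s ∑_{i+j=s, i,j ≤ n} c_i c_j K(i, j)`.
On each antidiagonal `i + j = s` both `K(i, j)` and, by log-concavity, `c_i c_j` increase with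
`i j`, and `K` has nonnegative sum, so by Chebyshev's sum inequality every antidiagonal
contributes nonnegatively, and the one with `s = 0` positively. Hence each `φ_k` is strictly
convex on `[0, ∞)`, and the objective is a continuous strictly convex function on a nonempty
compact convex set.
-/

/-- `a_j(r)` coefficients of the M/M/m/n queue. -/
noncomputable def aCoef (m j : ℕ) (r : ℝ) : ℝ :=
  if j ≤ m then r ^ j / (Nat.factorial j : ℝ)
  else (r ^ m / (Nat.factorial m : ℝ)) * (r / (m : ℝ)) ^ (j - m)

/-- Blocking probability `B_{m,n}(r)` of the M/M/m/n queue with offered load `r`. -/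
noncomputable def Bmn (m n : ℕ) (r : ℝ) : ℝ :=
  aCoef m n r / ∑ j ∈ Finset.range (n + 1), aCoef m j r

/-- Mean number in system `L_{m,n}(r)` of the M/M/m/n queue with offered load `r`. -/
noncomputable def Lmn (m n : ℕ) (r : ℝ) : ℝ :=
  (∑ j ∈ Finset.range (n + 1), (j : ℝ) * aCoef m j r) /
    ∑ j ∈ Finset.range (n + 1), aCoef m j r

/-- Erlang-B formula `B_m(r)`. -/
noncomputable def erlangB (m : ℕ) (r : ℝ) : ℝ :=
  (r ^ m / (Nat.factorial m : ℝ)) / ∑ j ∈ Finset.range (m + 1), r ^ j / (Nat.factorial j : ℝ)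

open Finset

section LogConcave

variable {c : ℕ → ℝ}

lemma mul_succ_le_succ_mul (hc : ∀ j, 0 < c j) (hρ : Monotone fun j => c j / c (j + 1))
    {i j : ℕ} (hij : i ≤ j) : c i * c (j + 1) ≤ c (i + 1) * c j := by
  have h := hρ hij
  rwa [div_le_div_iff₀ (hc _) (hc _), mul_comm (c j)] at h

lemma mul_add_le_add_mul (hc : ∀ j, 0 < c j) (hρ : Monotone fun j => c j / c (j + 1))
    (d : ℕ) {i j : ℕ} (hij : i + d ≤ j) : c i * c (j + d) ≤ c (i + d) * c j := by
  induction d generalizing i with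
  | zero => rfl
  | succ d ih =>
    calc c i * c (j + d + 1) ≤ c (i + 1) * c (j + d) := mul_succ_le_succ_mul hc hρ (by omega)
      _ ≤ c (i + 1 + d) * c j := ih (by omega)
      _ = c (i + (d + 1)) * c j := by rw [add_right_comm, add_assoc]

lemma mul_le_mul_of_add_eq_of_mul_le (hc : ∀ j, 0 < c j)
    (hρ : Monotone fun j => c j / c (j + 1)) {i j i' j' : ℕ} (hs : i + j = i' + j')
    (h : i * j ≤ i' * j') : c i * c j ≤ c i' * c j' := by
  have ordered : ∀ {i j i' j' : ℕ}, i ≤ j → i' ≤ j' → i + j = i' + j' → i * j ≤ i' * j' →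
      c i * c j ≤ c i' * c j' := by
    intro i j i' j' hij hij' hs h
    -- on `i + j = s`, `i ≤ j`, the product `i * j` is increasing in `i`
    have hii' : i ≤ i' := by nlinarith
    have := mul_add_le_add_mul hc hρ (i' - i) (i := i) (j := j') (by omega)
    rwa [show j' + (i' - i) = j by omega, show i + (i' - i) = i' by omega] at this
  rcases le_total i j with hij | hij <;> rcases le_total i' j' with hij' | hij'
  · exact ordered hij hij' hs h
  · simpa only [mul_comm (c i')] using ordered hij hij' (by omega) (by linarith)
  · simpa only [mul_comm (c i)] using ordered hij hij' (by omega) (by linarith)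
  · simpa only [mul_comm (c i), mul_comm (c i')] using ordered hij hij' (by omega) (by linarith)

end LogConcave

lemma sum_mul_nonneg_of_monovaryOn {ι α : Type*} [Field α] [LinearOrder α]
    [IsStrictOrderedRing α] {s : Finset ι} {f g : ι → α}
    (hfg : MonovaryOn f g s) (hf : ∀ i ∈ s, 0 ≤ f i) (hg : 0 ≤ ∑ i ∈ s, g i) :
    0 ≤ ∑ i ∈ s, f i * g i := by
  rcases s.eq_empty_or_nonempty with rfl | hs
  · simp
  · have hcard : (0 : α) < #s := by exact_mod_cast hs.card_pos
    have := hfg.sum_mul_sum_le_card_mul_sum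
    have := mul_nonneg (sum_nonneg hf) hg
    nlinarith

lemma sum_range_sum_range_eq_sum_Icc {M : Type*} [AddCommMonoid M] (f : ℕ → ℕ → M) (n : ℕ) :
    ∑ i ∈ range (n + 1), ∑ j ∈ range (n + 1), f i j =
      ∑ s ∈ range (2 * n + 1), ∑ i ∈ Icc (s - n) (min s n), f i (s - i) := by
  rw [← sum_product', ← sum_fiberwise_of_maps_to (g := fun p : ℕ × ℕ => p.1 + p.2)
    (t := range (2 * n + 1)) (fun p hp => by simp only [mem_product, mem_range] at hp ⊢; omega)]
  refine sum_congr rfl fun s _ => sum_nbij' Prod.fst (fun i => (i, s - i)) ?_ ?_ ?_ ?_ ?_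
  · intro p hp
    simp only [mem_filter, mem_product, mem_range] at hp
    simp only [mem_Icc]
    omega
  · intro i hi
    simp only [mem_Icc] at hi
    simp only [mem_filter, mem_product, mem_range]
    omega
  · intro p hp
    simp only [mem_filter, mem_product, mem_range] at hp
    exact Prod.ext rfl (by dsimp only; omega)
  · intro i _
    rfl
  · intro p hp
    simp only [mem_filter, mem_product, mem_range] at hp
    rw [show s - p.1 = p.2 by omega]

lemma sum_range_succ_quadratic (N : ℕ) (A B C : ℝ) :
    ∑ a ∈ range (N + 1), (A + B * a + C * a ^ 2) =
      (N + 1) * (A + B * N / 2 + C * N * (2 * N + 1) / 6) := by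
  induction N with
  | zero => simp
  | succ N ih => rw [sum_range_succ, ih]; push_cast; ring

noncomputable def momentKernel (n i j : ℕ) : ℝ :=
  3 * (n - i) * (n - j) - (2 * n - i - j) * (2 * n - i - j - 1) / 2

lemma sum_momentKernel_nonneg {n s : ℕ} (hs : s ≤ 2 * n) :
    0 ≤ ∑ i ∈ Icc (s - n) (min s n), momentKernel n i (s - i) := by
  rw [← Ico_add_one_right_eq_Icc, sum_Ico_eq_sum_range]
  rcases le_total s n with hsn | hns
  · rw [show s - n = 0 by omega, min_eq_left hsn, Nat.sub_zero]
    have hterm : ∀ a ∈ range (s + 1), momentKernel n (0 + a) (s - (0 + a)) =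
        (3 * n * (n - s) - (2 * n - s) * (2 * n - s - 1) / 2) + 3 * s * a + (-3) * a ^ 2 := by
      intro a ha
      rw [mem_range] at ha
      rw [momentKernel, zero_add, Nat.cast_sub (by omega)]
      ring
    rw [sum_congr rfl hterm, sum_range_succ_quadratic]
    have hsn' : (s : ℝ) ≤ n := by exact_mod_cast hsn
    calc (0 : ℝ) ≤ (s + 1) * (n + 1) * (n - s) := by
          have := sub_nonneg.2 hsn'
          positivity
      _ = _ := by ring
  · rw [min_eq_right hns, show n + 1 - (s - n) = (2 * n - s) + 1 by omega]
    have hterm : ∀ a ∈ range (2 * n - s + 1), momentKernel n (s - n + a) (s - (s - n + a)) =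
        (-((2 * n - s : ℕ) : ℝ) * ((2 * n - s : ℕ) - 1) / 2) + 3 * (2 * n - s : ℕ) * a
          + (-3) * a ^ 2 := by
      intro a ha
      rw [mem_range] at ha
      rw [momentKernel, Nat.cast_sub (by omega), Nat.cast_add, Nat.cast_sub hns,
        Nat.cast_sub hs]
      push_cast
      ring
    rw [sum_congr rfl hterm, sum_range_succ_quadratic]
    exact le_of_eq (by ring)

lemma sum_mul_momentKernel_nonneg {c : ℕ → ℝ} (hc : ∀ j, 0 < c j)
    (hρ : Monotone fun j => c j / c (j + 1)) {n s : ℕ} (hs : s ≤ 2 * n) :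
    0 ≤ ∑ i ∈ Icc (s - n) (min s n), c i * c (s - i) * momentKernel n i (s - i) := by
  refine sum_mul_nonneg_of_monovaryOn (fun i hi i' hi' hlt => ?_)
    (fun i _ => (mul_pos (hc _) (hc _)).le) (sum_momentKernel_nonneg hs)
  simp only [coe_Icc, Set.mem_Icc] at hi hi'
  refine mul_le_mul_of_add_eq_of_mul_le hc hρ (by omega) ?_
  have hlt' : ((i * (s - i) : ℕ) : ℝ) < ((i' * (s - i') : ℕ) : ℝ) := by
    simp only [momentKernel] at hlt
    push_cast [Nat.cast_sub (show i ≤ s by omega), Nat.cast_sub (show i' ≤ s by omega)] at hlt ⊢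
    linarith
  exact_mod_cast hlt'.le

lemma hasDerivAt_pow_of_ne_zero {r : ℝ} (hr : r ≠ 0) (k : ℕ) :
    HasDerivAt (fun x => x ^ k) (k * r ^ k / r) r := by
  refine (hasDerivAt_pow k r).congr_deriv ?_
  rcases k with _ | k
  · simp
  · rw [pow_succ]
    field_simp
    simp

noncomputable def moment (c : ℕ → ℝ) (n k : ℕ) (r : ℝ) : ℝ :=
  ∑ j ∈ range (n + 1), (j : ℝ) ^ k * c j * r ^ j

section Moment

variable (c : ℕ → ℝ) (n : ℕ) {r : ℝ}

lemma moment_quadratic_eq_sum :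
    n * (n + 1) * moment c n 0 r ^ 2 - (2 * n + 1) * moment c n 0 r * moment c n 1 r
        + 2 * moment c n 1 r ^ 2 - moment c n 0 r * moment c n 2 r =
      ∑ s ∈ range (2 * n + 1),
        r ^ s * ∑ i ∈ Icc (s - n) (min s n), c i * c (s - i) * momentKernel n i (s - i) := by
  -- split the mixed products symmetrically, so that the kernel of the double sum is symmetric
  calc _ = n * (n + 1) * (moment c n 0 r * moment c n 0 r)
        - (2 * n + 1) / 2 * (moment c n 0 r * moment c n 1 r + moment c n 1 r * moment c n 0 r)
        + 2 * (moment c n 1 r * moment c n 1 r)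
        - (moment c n 0 r * moment c n 2 r + moment c n 2 r * moment c n 0 r) / 2 := by ring
    _ = ∑ i ∈ range (n + 1), ∑ j ∈ range (n + 1),
          r ^ (i + j) * (c i * c j * momentKernel n i j) := by
      simp only [moment, sum_mul_sum]
      simp only [mul_sum, ← sum_add_distrib, ← sum_sub_distrib, sum_div]
      refine sum_congr rfl fun i _ => sum_congr rfl fun j _ => ?_
      rw [momentKernel, pow_add]
      ring
    _ = _ := by
      rw [sum_range_sum_range_eq_sum_Icc]
      refine sum_congr rfl fun s _ => ?_
      rw [mul_sum]
      refine sum_congr rfl fun i hi => ?_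
      rw [Nat.add_sub_cancel' (by simp only [mem_Icc] at hi; omega)]

lemma hasDerivAt_moment (hr : r ≠ 0) (k : ℕ) :
    HasDerivAt (moment c n k) (moment c n (k + 1) r / r) r := by
  unfold moment
  rw [sum_div]
  exact HasDerivAt.fun_sum fun j _ => by
    refine ((hasDerivAt_pow_of_ne_zero hr j).const_mul ((j : ℝ) ^ k * c j)).congr_deriv ?_
    ring

lemma continuous_moment (k : ℕ) : Continuous (moment c n k) := by
  unfold moment
  fun_prop

variable {c n}

lemma moment_zero_pos (hc : ∀ j, 0 < c j) (hr : 0 ≤ r) : 0 < moment c n 0 r :=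
  sum_pos' (fun j _ => by have := hc j; positivity) ⟨0, by simp, by simpa using hc 0⟩

lemma hasDerivAt_mul_pow_div_moment (hr : r ≠ 0) (hM : moment c n 0 r ≠ 0) :
    HasDerivAt (fun x => c n * x ^ (n + 1) / moment c n 0 x)
      (c n * r ^ n * ((n + 1) * moment c n 0 r - moment c n 1 r) / moment c n 0 r ^ 2) r := by
  refine (((hasDerivAt_pow_of_ne_zero hr (n + 1)).const_mul (c n)).div
    (hasDerivAt_moment c n hr 0) hM).congr_deriv ?_
  rw [pow_succ]
  field_simp
  push_cast
  ring

lemma hasDerivAt_deriv_mul_pow_div_moment (hr : r ≠ 0) (hM : moment c n 0 r ≠ 0) :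
    HasDerivAt
      (fun x => c n * x ^ n * ((n + 1) * moment c n 0 x - moment c n 1 x) / moment c n 0 x ^ 2)
      (c n * r ^ n * (n * (n + 1) * moment c n 0 r ^ 2
          - (2 * n + 1) * moment c n 0 r * moment c n 1 r
          + 2 * moment c n 1 r ^ 2 - moment c n 0 r * moment c n 2 r) / (r * moment c n 0 r ^ 3))
      r := by
  refine ((((hasDerivAt_pow_of_ne_zero hr n).const_mul (c n)).mul
    (((hasDerivAt_moment c n hr 0).const_mul ((n : ℝ) + 1)).sub (hasDerivAt_moment c n hr 1))).div
    ((hasDerivAt_moment c n hr 0).pow 2) (pow_ne_zero 2 hM)).congr_deriv ?_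
  simp only [Pi.mul_apply, Pi.sub_apply, Pi.pow_apply]
  field_simp
  push_cast
  ring

lemma moment_quadratic_pos (hc : ∀ j, 0 < c j) (hρ : Monotone fun j => c j / c (j + 1))
    (hn : 1 ≤ n) (hr : 0 < r) :
    0 < n * (n + 1) * moment c n 0 r ^ 2 - (2 * n + 1) * moment c n 0 r * moment c n 1 r
        + 2 * moment c n 1 r ^ 2 - moment c n 0 r * moment c n 2 r := by
  rw [moment_quadratic_eq_sum]
  refine sum_pos' (fun s hs => mul_nonneg (by positivity)
    (sum_mul_momentKernel_nonneg hc hρ (by rw [mem_range] at hs; omega))) ⟨0, by simp, ?_⟩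
  have hK : momentKernel n 0 0 = n * (n + 1) := by
    simp only [momentKernel, Nat.cast_zero]
    ring
  have hn' : (0 : ℝ) < n := by exact_mod_cast hn
  simp only [pow_zero, Nat.zero_sub, zero_le, min_eq_left, Icc_self, sum_singleton, one_mul, hK]
  exact mul_pos (mul_pos (hc 0) (hc 0)) (by positivity)

theorem continuousOn_mul_pow_div_moment (hc : ∀ j, 0 < c j) :
    ContinuousOn (fun r => c n * r ^ (n + 1) / moment c n 0 r) (Set.Ici 0) :=
  (by fun_prop : Continuous fun r : ℝ => c n * r ^ (n + 1)).continuousOn.div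
    (continuous_moment c n 0).continuousOn fun _ hr => (moment_zero_pos hc hr).ne'

theorem strictConvexOn_mul_pow_div_moment (hc : ∀ j, 0 < c j)
    (hρ : Monotone fun j => c j / c (j + 1)) (hn : 1 ≤ n) :
    StrictConvexOn ℝ (Set.Ici 0) fun r => c n * r ^ (n + 1) / moment c n 0 r := by
  refine strictConvexOn_of_deriv2_pos (convex_Ici 0) (continuousOn_mul_pow_div_moment hc)
    fun r hr => ?_
  rw [interior_Ici, Set.mem_Ioi] at hr
  have hM : ∀ {x : ℝ}, 0 < x → moment c n 0 x ≠ 0 := fun hx => (moment_zero_pos hc hx.le).ne'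
  have hderiv : deriv (fun x => c n * x ^ (n + 1) / moment c n 0 x) =ᶠ[nhds r]
      fun x => c n * x ^ n * ((n + 1) * moment c n 0 x - moment c n 1 x) / moment c n 0 x ^ 2 := by
    filter_upwards [Ioi_mem_nhds hr] with x hx
    exact (hasDerivAt_mul_pow_div_moment hx.ne' (hM hx)).deriv
  rw [Function.iterate_succ_apply, Function.iterate_one, hderiv.deriv_eq,
    (hasDerivAt_deriv_mul_pow_div_moment hr.ne' (hM hr)).deriv]
  exact div_pos (mul_pos (mul_pos (hc n) (pow_pos hr n)) (moment_quadratic_pos hc hρ hn hr))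
    (mul_pos hr (pow_pos (moment_zero_pos hc hr.le) 3))

end Moment

lemma aCoef_mul (m j : ℕ) (r t : ℝ) : aCoef m j (r * t) = aCoef m j r * t ^ j := by
  unfold aCoef
  split_ifs with h
  · ring
  · rw [← pow_sub_mul_pow t (le_of_not_ge h)]
    ring

lemma aCoef_mul_self {m : ℕ} (hm : 1 ≤ m) (j : ℕ) (r : ℝ) :
    aCoef m j r * r = (min (j + 1) m : ℕ) * aCoef m (j + 1) r := by
  have hm' : (m : ℝ) ≠ 0 := by positivity
  unfold aCoef
  rcases lt_trichotomy j m with h | rfl | h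
  · rw [if_pos h.le, if_pos (show j + 1 ≤ m by omega), min_eq_left (show j + 1 ≤ m by omega),
      Nat.factorial_succ]
    push_cast
    field_simp
    ring
  · rw [if_pos le_rfl, if_neg (by omega), min_eq_right (by omega), Nat.add_sub_cancel_left]
    field_simp
  · rw [if_neg (by omega), if_neg (by omega), min_eq_right (by omega),
      show j + 1 - m = j - m + 1 by omega, pow_succ]
    field_simp

lemma aCoef_pos {m : ℕ} (hm : 1 ≤ m) (j : ℕ) {r : ℝ} (hr : 0 < r) : 0 < aCoef m j r := by
  have hm' : (0 : ℝ) < m := by exact_mod_cast hm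
  unfold aCoef
  split_ifs
  · positivity
  · exact mul_pos (by positivity) (pow_pos (div_pos hr hm') _)

lemma monotone_aCoef_div_succ {m : ℕ} (hm : 1 ≤ m) {r : ℝ} (hr : 0 < r) :
    Monotone fun j => aCoef m j r / aCoef m (j + 1) r := by
  have hratio : ∀ j, aCoef m j r / aCoef m (j + 1) r = (min (j + 1) m : ℕ) / r := fun j => by
    rw [div_eq_div_iff (aCoef_pos hm _ hr).ne' hr.ne', aCoef_mul_self hm]
  intro i j hij
  simp only [hratio]
  gcongr

lemma mul_Bmn_div_eq (m n : ℕ) (μ t : ℝ) :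
    t * Bmn m n (t / μ) = aCoef m n μ⁻¹ * t ^ (n + 1) / moment (fun j => aCoef m j μ⁻¹) n 0 t := by
  simp only [Bmn, moment, div_eq_inv_mul t μ, aCoef_mul, pow_zero, one_mul]
  ring

theorem strictConvexOn_mul_Bmn_div {m n : ℕ} (hm : 1 ≤ m) (hn : 1 ≤ n) {μ : ℝ} (hμ : 0 < μ) :
    StrictConvexOn ℝ (Set.Ici 0) fun t => t * Bmn m n (t / μ) := by
  rw [funext (mul_Bmn_div_eq m n μ)]
  exact strictConvexOn_mul_pow_div_moment (fun j => aCoef_pos hm j (inv_pos.2 hμ))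
    (monotone_aCoef_div_succ hm (inv_pos.2 hμ)) hn

theorem continuousOn_mul_Bmn_div {m : ℕ} (hm : 1 ≤ m) (n : ℕ) {μ : ℝ} (hμ : 0 < μ) :
    ContinuousOn (fun t => t * Bmn m n (t / μ)) (Set.Ici 0) := by
  rw [funext (mul_Bmn_div_eq m n μ)]
  exact continuousOn_mul_pow_div_moment fun j => aCoef_pos hm j (inv_pos.2 hμ)

lemma StrictConvexOn.sum_apply {ι : Type*} [Fintype ι] {s : ι → Set ℝ} {f : ι → ℝ → ℝ}
    (hf : ∀ i, StrictConvexOn ℝ (s i) (f i)) :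
    StrictConvexOn ℝ (Set.univ.pi s) fun v => ∑ i, f i (v i) := by
  refine ⟨convex_pi fun i _ => (hf i).1, fun v hv w hw hvw a b ha hb hab => ?_⟩
  obtain ⟨i, hi⟩ := Function.ne_iff.1 hvw
  simp only [Pi.add_apply, Pi.smul_apply, smul_eq_mul, mul_sum, ← sum_add_distrib]
  refine sum_lt_sum (fun j _ => ?_) ⟨i, mem_univ i, ?_⟩
  · exact (hf j).convexOn.2 (hv j trivial) (hw j trivial) ha.le hb.le hab
  · exact (hf i).2 (hv i trivial) (hw i trivial) hi ha hb hab

lemma existsUnique_isMinOn_of_strictConvexOn {E : Type*} [TopologicalSpace E] [AddCommMonoid E]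
    [SMul ℝ E] {s : Set E} {f : E → ℝ} (hs : IsCompact s) (hne : s.Nonempty)
    (hf : StrictConvexOn ℝ s f) (hfc : ContinuousOn f s) : ∃! x, x ∈ s ∧ IsMinOn f s x :=
  let ⟨x, hx, hmin⟩ := hs.exists_isMinOn hne hfc
  ⟨x, ⟨hx, hmin⟩, fun _ ⟨hy, hymin⟩ => hf.eq_of_isMinOn hymin hmin hy hx⟩

def loadSplits (ι : Type*) [Fintype ι] (lam : ℝ) : Set (ι → ℝ) :=
  {v | (∀ k, v k ∈ Set.Icc 0 lam) ∧ ∑ k, v k = lam}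

section LoadSplits

variable {ι : Type*} [Fintype ι] {lam : ℝ}

lemma loadSplits_subset_pi : loadSplits ι lam ⊆ Set.univ.pi fun _ => Set.Ici 0 :=
  fun _ hv k _ => (hv.1 k).1

lemma loadSplits_eq_pi_inter :
    loadSplits ι lam = (Set.univ.pi fun _ => Set.Icc 0 lam) ∩ {v | ∑ k, v k = lam} := by
  ext v
  simp only [loadSplits, Set.mem_inter_iff, Set.mem_pi, Set.mem_univ, forall_const]
  rfl

lemma isCompact_loadSplits : IsCompact (loadSplits ι lam) := by
  rw [loadSplits_eq_pi_inter]
  exact (isCompact_univ_pi fun _ => isCompact_Icc).inter_right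
    (isClosed_eq (continuous_finsetSum _ fun k _ => continuous_apply k) continuous_const)

lemma convex_loadSplits : Convex ℝ (loadSplits ι lam) := by
  rw [loadSplits_eq_pi_inter]
  exact (convex_pi fun _ _ => convex_Icc 0 lam).inter <| convex_hyperplane
    ⟨fun v w => sum_add_distrib, fun a v => (mul_sum _ _ _).symm⟩ lam

lemma loadSplits_nonempty [Nonempty ι] (hlam : 0 ≤ lam) : (loadSplits ι lam).Nonempty := by
  classical
  obtain ⟨k₀⟩ := ‹Nonempty ι›
  refine ⟨Pi.single k₀ lam, fun k => ?_, by simp⟩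
  rcases eq_or_ne k k₀ with rfl | hk
  · simp [hlam]
  · simp [hk, hlam]

end LoadSplits

/-- the OBS nonlinear program has a unique minimizer. -/
theorem stmt_5 (K : ℕ) (hK : 1 ≤ K) (lam : ℝ) (hlam : 0 < lam)
    (m n : Fin K → ℕ) (μ : Fin K → ℝ)
    (hm : ∀ k, 1 ≤ m k) (hn : ∀ k, m k ≤ n k) (hμ : ∀ k, 0 < μ k)
    (φ : Fin K → ℝ → ℝ) (hφ0 : ∀ k, φ k 0 = 0)
    (hφ : ∀ k, ∀ t : ℝ, 0 < t → φ k t = t * Bmn (m k) (n k) (t / μ k)) :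
    ∃! v : Fin K → ℝ,
      ((∀ k, v k ∈ Set.Icc (0 : ℝ) lam) ∧ ∑ k, v k = lam) ∧
      ∀ w : Fin K → ℝ, ((∀ k, w k ∈ Set.Icc (0 : ℝ) lam) ∧ ∑ k, w k = lam) →
        ∑ k, φ k (v k) ≤ ∑ k, φ k (w k) := by
  have : Nonempty (Fin K) := ⟨⟨0, hK⟩⟩
  have hφ' : ∀ k, Set.EqOn (fun t => t * Bmn (m k) (n k) (t / μ k)) (φ k) (Set.Ici 0) := by
    intro k t (ht : 0 ≤ t)
    rcases ht.eq_or_lt with rfl | ht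
    · simp [hφ0]
    · exact (hφ k t ht).symm
  have hobj : Set.EqOn (fun v => ∑ k, v k * Bmn (m k) (n k) (v k / μ k))
      (fun v => ∑ k, φ k (v k)) (loadSplits (Fin K) lam) :=
    fun v hv => sum_congr rfl fun k _ => hφ' k (loadSplits_subset_pi hv k trivial)
  have hconv := ((StrictConvexOn.sum_apply fun k => strictConvexOn_mul_Bmn_div (hm k)
    ((hm k).trans (hn k)) (hμ k)).subset loadSplits_subset_pi convex_loadSplits).congr hobj
  have hcont : ContinuousOn (fun v => ∑ k, φ k (v k)) (loadSplits (Fin K) lam) := by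
    refine ContinuousOn.congr (continuousOn_finsetSum _ fun k _ => ?_) hobj.symm
    exact (continuousOn_mul_Bmn_div (hm k) _ (hμ k)).comp (continuous_apply k).continuousOn
      fun v hv => loadSplits_subset_pi hv k trivial
  obtain ⟨v, ⟨hv, hmin⟩, huniq⟩ := existsUnique_isMinOn_of_strictConvexOn isCompact_loadSplits
    (loadSplits_nonempty hlam.le) hconv hcont
  exact ⟨v, ⟨hv, fun w hw => hmin hw⟩, fun u ⟨hu, humin⟩ => huniq u ⟨hu, fun w hw => humin w hw⟩⟩
end

section
/- Let m ≥ 1 and n ≥ m be integers and r > 0 a real, and set ρ = r/m. If r ≠ m, then 1 − ρ + ρ·(1 − ρ^{n−m})·B_m(r) ≠ 0 and B_{m,n}(r) = ρ^{n−m}·(1−ρ)·B_m(r) / (1 − ρ + ρ·(1 − ρ^{n−m})·B_m(r)). If r = m, then B_{m,n}(m) = B_m(m) / (1 + (n − m)·B_m(m)). -/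
/-
Splitting the normalising sum of the M/M/m/n queue at `j = m` gives the Erlang-B sum plus
`r^m/m!` times the geometric tail `ρ + ρ² + ⋯ + ρ^(n-m)`. Dividing through by the Erlang-B sum
expresses `B_{m,n}(r)` through `B_m(r)` and that tail, and summing the tail (geometrically if
`ρ ≠ 1`, as `n - m` copies of `1` if `ρ = 1`) gives the two closed forms.
-/

open Finset
open scoped Nat

lemma aCoef_of_le {m j : ℕ} (h : j ≤ m) (r : ℝ) : aCoef m j r = r ^ j / j ! := if_pos h

lemma aCoef_add (m k : ℕ) (r : ℝ) : aCoef m (m + k) r = r ^ m / m ! * (r / m) ^ k := by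
  rcases k.eq_zero_or_pos with rfl | hk
  · simp [aCoef]
  · rw [aCoef, if_neg (by omega), Nat.add_sub_cancel_left]

lemma sum_range_aCoef {m n : ℕ} (hn : m ≤ n) (r : ℝ) :
    ∑ j ∈ range (n + 1), aCoef m j r =
      ∑ j ∈ range (m + 1), r ^ j / j ! + r ^ m / m ! * ∑ k ∈ range (n - m), (r / m) ^ (k + 1) := by
  rw [show n + 1 = m + 1 + (n - m) by omega, sum_range_add, mul_sum]
  congr 1
  · exact sum_congr rfl fun j hj => aCoef_of_le (Nat.lt_succ_iff.mp (mem_range.mp hj)) r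
  · exact sum_congr rfl fun k _ => by rw [add_assoc, add_comm 1 k, aCoef_add]

lemma sum_range_pow_div_factorial_pos {r : ℝ} (hr : 0 ≤ r) (m : ℕ) :
    0 < ∑ j ∈ range (m + 1), r ^ j / j ! :=
  sum_pos' (fun _ _ => by positivity) ⟨0, by simp⟩

lemma erlangB_nonneg {r : ℝ} (hr : 0 ≤ r) (m : ℕ) : 0 ≤ erlangB m r :=
  div_nonneg (by positivity) (sum_range_pow_div_factorial_pos hr m).le

lemma Bmn_eq_erlangB {m n : ℕ} (hn : m ≤ n) {r : ℝ} (hr : 0 ≤ r) :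
    Bmn m n r = (r / m) ^ (n - m) * erlangB m r /
      (1 + erlangB m r * ∑ k ∈ range (n - m), (r / m) ^ (k + 1)) := by
  have hS := (sum_range_pow_div_factorial_pos hr m).ne'
  obtain ⟨k, rfl⟩ := Nat.exists_eq_add_of_le hn
  rw [Bmn, sum_range_aCoef hn, aCoef_add, erlangB, Nat.add_sub_cancel_left]
  field_simp

lemma one_sub_mul_sum_range_pow_succ {R : Type*} [CommRing R] (x : R) (n : ℕ) :
    (1 - x) * ∑ k ∈ range n, x ^ (k + 1) = x * (1 - x ^ n) := by
  simp_rw [pow_succ']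
  rw [← mul_sum, mul_left_comm, mul_neg_geom_sum]

/-- expression of `B_{m,n}(r)` in terms of the Erlang-B function. -/
theorem stmt_14 (m n : ℕ) (hm : 1 ≤ m) (hn : m ≤ n) (r : ℝ) (hr : 0 < r)
    (ρ : ℝ) (hρ : ρ = r / (m : ℝ)) :
    (r ≠ (m : ℝ) →
      1 - ρ + ρ * (1 - ρ ^ (n - m)) * erlangB m r ≠ 0 ∧
      Bmn m n r =
        ρ ^ (n - m) * (1 - ρ) * erlangB m r /
          (1 - ρ + ρ * (1 - ρ ^ (n - m)) * erlangB m r)) ∧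
    (r = (m : ℝ) →
      Bmn m n (m : ℝ) = erlangB m (m : ℝ) / (1 + ((n : ℝ) - (m : ℝ)) * erlangB m (m : ℝ))) := by
  have hm0 : (m : ℝ) ≠ 0 := by positivity
  refine ⟨fun hrm => ?_, fun hrm => ?_⟩
  · have hρ1 : 1 - ρ ≠ 0 := by
      rw [hρ, sub_ne_zero, ne_comm, ne_eq, div_eq_one_iff_eq hm0]
      exact hrm
    have hden : 0 < 1 + erlangB m r * ∑ k ∈ range (n - m), ρ ^ (k + 1) := by
      have := erlangB_nonneg hr.le m
      rw [hρ]
      positivity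
    have hD : 1 - ρ + ρ * (1 - ρ ^ (n - m)) * erlangB m r =
        (1 - ρ) * (1 + erlangB m r * ∑ k ∈ range (n - m), ρ ^ (k + 1)) := by
      rw [mul_add, mul_left_comm, one_sub_mul_sum_range_pow_succ]
      ring
    refine hD ▸ ⟨mul_ne_zero hρ1 hden.ne', ?_⟩
    rw [Bmn_eq_erlangB hn hr.le, ← hρ, mul_right_comm, mul_comm (1 - ρ),
      mul_div_mul_right _ _ hρ1]
  · rw [Bmn_eq_erlangB hn (Nat.cast_nonneg m), div_self hm0, ← Nat.cast_sub hn]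
    simp [mul_comm]
end
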